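/- Arf-Brown-Kervaire relation: if q(v) = 0 for the characteristic element v of (V,λ,q), then BK(V,λ,q) = 4·Arf(W,[λ],h) ∈ 4(ℤ/2) ⊆ ℤ/8, where (W,[λ],h) is the sublagrangian quotient L^⊥/⟨v⟩ with its induced ℤ/2-valued quadratic form h = [q]/2. -/

import Mathlib

lemma Ipow_mod' (m : ℕ) : Complex.I ^ m = Complex.I ^ (m % 4) := by
  conv_lhs => rw [← Nat.div_add_mod m 4]
  rw [pow_add, pow_mul, Complex.I_pow_four, one_pow, one_mul]

lemma Ipow_add' (a c : ZMod 4) :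
    Complex.I ^ (a + c).val = Complex.I ^ a.val * Complex.I ^ c.val := by
  rw [ZMod.val_add, ← Ipow_mod', pow_add]

lemma zmod2_cases (a : ZMod 2) : a = 0 ∨ a = 1 := by
  have : ∀ x : ZMod 2, x = 0 ∨ x = 1 := by decide
  exact this a

/-- Arf–Brown-Kervaire relation: if `q v = 0` for the characteristic element `v`
of a nonsingular quadratic enhancement `(V,lam,q)`, then `BK(V,lam,q) = 4·Arf(W,[lam],h)` in
`4(ℤ/2) ⊆ ℤ/8`, where `h` is the induced `ℤ/2`-valued quadratic form `[q]/2` on the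
sublagrangian quotient `W = L^⊥/⟨v⟩` (with `L^⊥ = {x : lam x x = 0}`), and the Arf invariant
is characterised by the sign of the real Gauss sum `∑_{x ∈ L^⊥} (-1)^{h x}`. -/
theorem brown_kervaire_eq_four_arf {V : Type} [AddCommGroup V] [Module (ZMod 2) V]
    [Fintype V] [FiniteDimensional (ZMod 2) V] [DecidableEq V]
    (lam : LinearMap.BilinForm (ZMod 2) V)
    (hsymm : ∀ x y : V, lam x y = lam y x)
    (hnd : lam.Nondegenerate)
    (q : V → ZMod 4)
    (hq : ∀ x y : V, q (x + y) = q x + q y + 2 * ((lam x y).val : ZMod 4))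
    (v : V) (hv : ∀ x : V, lam x x = lam x v)
    (hqv : q v = 0)
    (h : V → ZMod 2)
    (hh : ∀ x : V, lam x x = 0 → q x = 2 * ((h x).val : ZMod 4))
    (hwd : ∀ x y : V, lam x x = 0 → lam y y = 0 →
      x - y ∈ Submodule.span (ZMod 2) {v} → h x = h y)
    (arf : ZMod 2)
    (harf : ∃ c : ℝ, 0 < c ∧
      (∑ x ∈ Finset.univ.filter (fun x : V => lam x x = 0), ((-1 : ℝ)) ^ (h x).val)
        = (if arf = 0 then c else -c))
    (b : ZMod 8)
    (hb : (∑ x : V, Complex.I ^ (q x).val)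
        = ((Real.sqrt 2) ^ (Module.finrank (ZMod 2) V) : ℝ)
          * Complex.exp (2 * Real.pi * Complex.I * (b.val : ℂ) / 8)) :
    b = 4 * ((arf.val : ZMod 8)) := by
  classical
  set G : ℂ := ∑ x : V, Complex.I ^ (q x).val with hGdef
  set A : ℂ := ∑ x ∈ Finset.univ.filter (fun x : V => lam x x = 0),
      Complex.I ^ (q x).val with hAdef
  set B : ℂ := ∑ x ∈ Finset.univ.filter (fun x : V => ¬ lam x x = 0),
      Complex.I ^ (q x).val with hBdef
  -- key pointwise identity
  have key : ∀ x : V, Complex.I ^ (q (x + v)).val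
      = (-1 : ℂ) ^ (lam x x).val * Complex.I ^ (q x).val := by
    intro x
    have h1 : q (x + v) = q x + 2 * (((lam x x).val : ℕ) : ZMod 4) := by
      rw [hq x v, hqv, ← hv x]; ring
    have h3 : ((2 : ZMod 4) * (((lam x x).val : ℕ) : ZMod 4)).val = 2 * (lam x x).val := by
      rcases zmod2_cases (lam x x) with h2 | h2 <;> rw [h2] <;> decide
    rw [h1, Ipow_add', h3, pow_mul, Complex.I_sq, mul_comm]
  have hGshift : (∑ x : V, Complex.I ^ (q (x + v)).val) = G :=
    Fintype.sum_equiv (Equiv.addRight v) _ _ (fun x => rfl)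
  have hsigned : G = ∑ x : V, (-1 : ℂ) ^ (lam x x).val * Complex.I ^ (q x).val := by
    rw [← hGshift]
    exact Finset.sum_congr rfl (fun x _ => key x)
  have split1 : G = A + B := by
    rw [hGdef, hAdef, hBdef, Finset.sum_filter_add_sum_filter_not]
  have split2 : G = A - B := by
    rw [hsigned, ← Finset.sum_filter_add_sum_filter_not Finset.univ
      (fun x : V => lam x x = 0)]
    have e1 : ∑ x ∈ Finset.univ.filter (fun x : V => lam x x = 0),
        ((-1 : ℂ) ^ (lam x x).val * Complex.I ^ (q x).val) = A := by
      apply Finset.sum_congr rfl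
      intro x hx
      simp only [Finset.mem_filter] at hx
      rw [hx.2]
      norm_num
    have e2 : ∑ x ∈ Finset.univ.filter (fun x : V => ¬ lam x x = 0),
        ((-1 : ℂ) ^ (lam x x).val * Complex.I ^ (q x).val) = -B := by
      rw [hBdef, ← Finset.sum_neg_distrib]
      apply Finset.sum_congr rfl
      intro x hx
      simp only [Finset.mem_filter] at hx
      have hx1 : lam x x = 1 := by
        rcases zmod2_cases (lam x x) with h2 | h2
        · exact absurd h2 hx.2
        · exact h2
      rw [hx1, (by decide : ZMod.val (1 : ZMod 2) = 1), pow_one]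
      ring
    rw [e1, e2]
    ring
  have hB0 : B = 0 := by
    linear_combination (-1/2 : ℂ) * split1 + (1/2 : ℂ) * split2
  have hGA : G = A := by rw [split1, hB0, add_zero]
  obtain ⟨c, hc, hS⟩ := harf
  set S : ℝ := ∑ x ∈ Finset.univ.filter (fun x : V => lam x x = 0),
      ((-1 : ℝ)) ^ (h x).val with hSdef
  have hA : A = (S : ℂ) := by
    rw [hAdef, hSdef]
    push_cast
    apply Finset.sum_congr rfl
    intro x hx
    simp only [Finset.mem_filter] at hx
    have hx2 : (q x).val = 2 * (h x).val := by
      rw [hh x hx.2]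
      rcases zmod2_cases (h x) with h2 | h2 <;> rw [h2] <;> decide
    rw [hx2, pow_mul, Complex.I_sq]
  set R : ℝ := (Real.sqrt 2) ^ (Module.finrank (ZMod 2) V) with hRdef
  have hRpos : 0 < R := pow_pos (Real.sqrt_pos.mpr (by norm_num)) _
  set k : ℕ := b.val with hkdef
  have hklt : k < 8 := ZMod.val_lt b
  set t : ℝ := 2 * Real.pi * (k : ℝ) / 8 with htdef
  have hexp : Complex.exp (2 * Real.pi * Complex.I * (b.val : ℂ) / 8)
      = (Real.cos t : ℂ) + (Real.sin t : ℂ) * Complex.I := by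
    have : (2 * Real.pi * Complex.I * (b.val : ℂ) / 8) = (t : ℂ) * Complex.I := by
      rw [htdef]; push_cast; ring
    rw [this, Complex.exp_mul_I, Complex.ofReal_cos, Complex.ofReal_sin]
  have heq : (S : ℂ) = (R : ℂ) * ((Real.cos t : ℂ) + (Real.sin t : ℂ) * Complex.I) := by
    rw [← hA, ← hGA, hb, hexp, hRdef]
  have him : 0 = R * Real.sin t := by
    have := congrArg Complex.im heq
    simpa [Complex.sin_ofReal_re] using this
  have hre : S = R * Real.cos t := by
    have := congrArg Complex.re heq
    simpa [Complex.cos_ofReal_re] using this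
  have hsin : Real.sin t = 0 := by
    rcases mul_eq_zero.mp him.symm with h' | h'
    · exact absurd h' (ne_of_gt hRpos)
    · exact h'
  -- sin t = 0 forces k ∈ {0, 4}
  have hk04 : k = 0 ∨ k = 4 := by
    obtain ⟨n, hn⟩ := Real.sin_eq_zero_iff.mp hsin
    have hpi := Real.pi_ne_zero
    have h4n : ((4 * n : ℤ) : ℝ) = (k : ℝ) := by
      have : (n : ℝ) * Real.pi * 4 = (k : ℝ) * Real.pi := by
        rw [htdef] at hn
        field_simp at hn ⊢
        linarith
      push_cast
      have := mul_right_cancel₀ hpi (by linarith : 4 * (n : ℝ) * Real.pi = (k : ℝ) * Real.pi)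
      linarith
    have h4n' : 4 * n = (k : ℤ) := by exact_mod_cast h4n
    omega
  have harf01 := zmod2_cases arf
  rcases hk04 with hk | hk
  · -- k = 0 : S = R > 0, so arf = 0 and b = 0
    have hcos : Real.cos t = 1 := by
      rw [htdef, hk]; norm_num
    have hSpos : 0 < S := by rw [hre, hcos, mul_one]; exact hRpos
    have harf0 : arf = 0 := by
      rcases harf01 with h' | h'
      · exact h'
      · rw [h'] at hS; simp at hS; rw [hS] at hSpos; linarith
    have hb0 : b = 0 := by
      rw [hkdef] at hk
      exact (ZMod.val_eq_zero b).mp hk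
    rw [hb0, harf0]
    decide
  · -- k = 4 : S = -R < 0, so arf = 1 and b = 4
    have ht4 : t = Real.pi := by rw [htdef, hk]; push_cast; ring
    have hcos : Real.cos t = -1 := by rw [ht4, Real.cos_pi]
    have hSneg : S < 0 := by
      rw [hre, hcos]; nlinarith
    have harf1 : arf = 1 := by
      rcases harf01 with h' | h'
      · rw [h'] at hS; simp at hS; rw [hS] at hSneg; linarith
      · exact h'
    have hb4 : b = 4 := by
      have h1 : ((b.val : ℕ) : ZMod 8) = b := by simp [ZMod.natCast_val, ZMod.cast_id]
      rw [hkdef] at hk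
      rw [← h1, hk]
      decide
    rw [hb4, harf1]
    decide
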